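/- Let F be the free group on generators x_0, …, x_{q-1} (q ≥ 2), and let φ : F → F ≀ Sym(Fin q) = (Fin q → F) ⋊ Equiv.Perm (Fin q) be the group homomorphism defined by φ(x_0) = ((j ↦ x_j), σ) and φ(x_i) = ((j ↦ 1), σ) for i ≥ 1, where σ is the cyclic permutation j ↦ j+1. Let θ : F → F be the endomorphism with θ(x_i) = x_i x_{i+1} ⋯ x_{i-1} (the product of all q generators in cyclic order starting at i) and let γ : F → F be the automorphism with γ(x_i) = x_{i+1 mod q}. Then for every w ∈ F, φ(θ(w)) = ((j ↦ γ^j(w)), 1), i.e. the permutation part of φ(θ(w)) is trivial and its j-th coordinate is γ^j(w). -/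

import Mathlib

/-- The permutation action of `Equiv.Perm (Fin q)` on `Fin q → G` by permuting
coordinates, as a homomorphism to `MulAut`. -/
def permAut (q : ℕ) (G : Type*) [Group G] :
    Equiv.Perm (Fin q) →* MulAut (Fin q → G) where
  toFun σ :=
    { toFun := fun f => f ∘ σ.symm
      invFun := fun f => f ∘ σ
      left_inv := fun f => by ext j; simp
      right_inv := fun f => by ext j; simp
      map_mul' := fun f g => rfl }
  map_one' := by ext f j; rfl
  map_mul' := fun σ τ => by ext f j; rfl

/-- The permutational wreath product `G ≀ Sym(Fin q)`. -/
abbrev Wreath (q : ℕ) (G : Type*) [Group G] :=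
  (Fin q → G) ⋊[permAut q G] Equiv.Perm (Fin q)

/-- The Thue–Morse self-similarity decomposition
`φ : F → F ≀ Sym(Fin q)`, with `φ(x_0) = ⟨x_0,…,x_{q-1}⟩σ` and
`φ(x_i) = ⟨1,…,1⟩σ` for `i ≥ 1`, where `σ : j ↦ j + 1 (mod q)`. -/
noncomputable def phiW (q : ℕ) [NeZero q] :
    FreeGroup (Fin q) →* Wreath q (FreeGroup (Fin q)) :=
  FreeGroup.lift fun i : Fin q =>
    ⟨if i = 0 then (fun j => FreeGroup.of j) else 1, Equiv.addRight (1 : Fin q)⟩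

/-- The Thue–Morse substitution `θ` extended to the free group:
`θ(x_i) = x_i x_{i+1} ⋯ x_{i-1}`. -/
noncomputable def tmF (q : ℕ) [NeZero q] : FreeGroup (Fin q) →* FreeGroup (Fin q) :=
  FreeGroup.lift fun i : Fin q => (List.ofFn fun j : Fin q => FreeGroup.of (i + j)).prod

/-- The automorphism `γ` of the free group permuting the generators cyclically,
`x_i ↦ x_{i+1 mod q}`. -/
noncomputable def cycF (q : ℕ) [NeZero q] : FreeGroup (Fin q) →* FreeGroup (Fin q) :=
  FreeGroup.lift fun i : Fin q => FreeGroup.of (i + 1)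
/-!
Every `φ(x_k)` has permutation part `σ`, and only `φ(x_0)` has a nontrivial coordinate vector.
So in the product `φ(θ(x_i)) = φ(x_i) ⋯ φ(x_{i+q-1})` the permutation parts multiply to `σ^q = 1`,
and the coordinates come from the single factor `x_0 = x_{i+k}` (`k = -i`), shifted by `σ^k`:
coordinate `j` is `x_{j-k} = x_{i+j} = γ^j(x_i)`. Both sides of the claim are homomorphisms in `w`,
so this generator case suffices.
-/

open Fin.NatCast

namespace SemidirectProduct

variable {N G : Type*} [Group N] [Group G] {φ : G →* MulAut N}

theorem prod_ofFn_mk_const_right (g : G) :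
    ∀ {n : ℕ} (f : Fin n → N), (List.ofFn fun k => (⟨f k, g⟩ : N ⋊[φ] G)).prod =
      ⟨(List.ofFn fun k : Fin n => φ (g ^ (k : ℕ)) (f k)).prod, g ^ n⟩
  | 0, _ => by ext <;> simp
  | n + 1, f => by
    rw [List.ofFn_succ', List.prod_concat, prod_ofFn_mk_const_right g, List.ofFn_succ',
      List.prod_concat]
    exact SemidirectProduct.ext rfl (pow_succ g n).symm

end SemidirectProduct

theorem List.prod_map_eq_single {α M : Type*} [Monoid M] {l : List α} {f : α → M} {a : α}
    (hl : l.Nodup) (ha : a ∈ l) (hf : ∀ b ∈ l, b ≠ a → f b = 1) : (l.map f).prod = f a := by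
  induction l with
  | nil => simp at ha
  | cons b l ih =>
    rw [List.nodup_cons] at hl
    rw [List.map_cons, List.prod_cons]
    by_cases hb : b = a
    · subst hb
      rw [List.prod_eq_one, mul_one]
      simp only [List.mem_map]
      rintro _ ⟨c, hc, rfl⟩
      exact hf c (List.mem_cons_of_mem _ hc) (ne_of_mem_of_not_mem hc hl.1)
    · rw [hf b List.mem_cons_self hb, one_mul]
      exact ih hl.2 ((List.mem_cons.1 ha).resolve_left (Ne.symm hb))
        fun c hc => hf c (List.mem_cons_of_mem _ hc)

theorem List.prod_ofFn_eq_single {M : Type*} [Monoid M] {n : ℕ} {f : Fin n → M} (a : Fin n)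
    (hf : ∀ b, b ≠ a → f b = 1) : (List.ofFn f).prod = f a := by
  rw [List.ofFn_eq_map]
  exact List.prod_map_eq_single (List.nodup_finRange n) (List.mem_finRange a)
    fun b _ => hf b

theorem permAut_apply {q : ℕ} {G : Type*} [Group G] (σ : Equiv.Perm (Fin q)) (f : Fin q → G)
    (j : Fin q) : permAut q G σ f j = f (σ.symm j) := rfl

section

variable {q : ℕ} [NeZero q]

theorem phiW_tmF_of (i : Fin q) :
    phiW q (tmF q (FreeGroup.of i)) = ⟨fun j => FreeGroup.of (i + j), 1⟩ := by
  simp only [tmF, phiW, FreeGroup.lift_apply_of, map_list_prod, List.map_ofFn, Function.comp_def]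
  rw [SemidirectProduct.prod_ofFn_mk_const_right]
  refine SemidirectProduct.ext (funext fun j => ?_) ?_
  · dsimp only
    rw [Pi.list_prod_apply, List.map_ofFn, List.prod_ofFn_eq_single (-i)]
    · simp [permAut_apply, add_comm]
    · intro k hk
      have hik : i + k ≠ 0 := fun h => hk (eq_neg_of_add_eq_zero_right h)
      simp [permAut_apply, hik]
  · simp

theorem cycF_iterate_of (n : ℕ) (i : Fin q) :
    (⇑(cycF q))^[n] (FreeGroup.of i) = FreeGroup.of (i + n) := by
  induction n with
  | zero => simp
  | succ n ih =>
    rw [Function.iterate_succ_apply', ih, cycF, FreeGroup.lift_apply_of, Nat.cast_succ, add_assoc]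

end

theorem stmt_4_general (q : ℕ) [NeZero q] (w : FreeGroup (Fin q)) :
    phiW q (tmF q w) =
      ⟨fun j : Fin q => (⇑(cycF q))^[(j : ℕ)] w, 1⟩ := by
  let R : FreeGroup (Fin q) →* Wreath q (FreeGroup (Fin q)) :=
    MonoidHom.mk' (fun w => ⟨fun j : Fin q => (⇑(cycF q))^[(j : ℕ)] w, 1⟩) fun a b =>
      SemidirectProduct.ext (funext fun j => iterate_map_mul (cycF q) _ a b) (one_mul 1).symm
  have hcomp : (phiW q).comp (tmF q) = R := FreeGroup.ext_hom _ _ fun i => by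
    rw [MonoidHom.comp_apply, phiW_tmF_of]
    refine SemidirectProduct.ext (funext fun j => ?_) rfl
    simp [R, cycF_iterate_of]
  exact DFunLike.congr_fun hcomp w

theorem stmt_4 (q : ℕ) [NeZero q] (hq : 2 ≤ q) (w : FreeGroup (Fin q)) :
    phiW q (tmF q w) =
      ⟨fun j : Fin q => (⇑(cycF q))^[(j : ℕ)] w, 1⟩ :=
  stmt_4_general q w
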